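/- arXiv:1602.04095 — 4 statements merged into one kernel-verified Lean document; each statement's English description precedes it below -/
import Mathlib

section
/- There exists a prime number p with p ≤ 2^(c·d·log n) for some absolute constant c, and a linear function f : ℤ^n → 𝔽_p, such that f is injective when restricted to Boolean vectors with at most d nonzero coordinates. -/
/-!
A linear map `ℤ^n → 𝔽_p` has the form `v ↦ v ⬝ᵥ a` for some `a ∈ 𝔽_p^n`, and it identifies two
sparse Boolean vectors `u ≠ v` exactly when `a` lies in the hyperplane orthogonal to `u - v`
(which is nonzero mod `p`). There are at most `N = (n+1)^d` sparse Boolean vectors, hence fewer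
than `N^2` such hyperplanes, and by B. H. Neumann's lemma a vector space over `𝔽_p` is not covered
by fewer than `p` proper hyperplanes. So any prime `N^2 < p ≤ 2 N^2 ≤ 2^(5 d log n)`, which exists
by Bertrand's postulate, admits a good `a`.
-/

/-- A vector in `ℤ^n` is a `d`-sparse Boolean vector if all its coordinates are
`0` or `1` and at most `d` of them are nonzero. -/
def SparseBool (n d : ℕ) (v : Fin n → ℤ) : Prop :=
  (∀ i, v i = 0 ∨ v i = 1) ∧ (Finset.univ.filter fun i => v i ≠ 0).card ≤ d

open Finset Pointwise

theorem Module.Dual.exists_forall_apply_ne_zero {K V ι : Type*} [Field K] [AddCommGroup V]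
    [Module K V] {φ : ι → Module.Dual K V} {s : Finset ι} (hφ : ∀ i ∈ s, φ i ≠ 0)
    (hs : #s < Nat.card K) : ∃ v, ∀ i ∈ s, φ i v ≠ 0 := by
  by_contra! h
  have hcover : ⋃ i ∈ s, (0 : V) +ᵥ ((φ i).toAddMonoidHom.ker : Set V) = Set.univ :=
    Set.eq_univ_of_forall fun v => by
      obtain ⟨i, hi, hv⟩ := h v
      exact Set.mem_biUnion hi (by simpa using hv)
  obtain ⟨i, hi, -, hindex⟩ := AddSubgroup.exists_index_le_card_of_leftCoset_cover hcover
  rw [AddSubgroup.index_ker, AddMonoidHom.range_eq_top.mpr (LinearMap.surjective (hφ i hi)),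
    AddSubgroup.card_top] at hindex
  omega

theorem exists_injOn_dotProduct {K ι : Type*} [Field K] [Fintype ι]
    (S : Finset (ι → K)) (hS : #S ^ 2 < Nat.card K) :
    ∃ a : ι → K, Set.InjOn (· ⬝ᵥ a) S := by
  classical
  have hφ : ∀ q ∈ S.offDiag, dotProductBilin K K (q.1 - q.2) ≠ 0 := by
    intro q hq hzero
    obtain ⟨i, hi⟩ := Function.ne_iff.mp (sub_ne_zero.mpr (mem_offDiag.mp hq).2.2)
    apply hi
    simpa using LinearMap.congr_fun hzero (Pi.single i 1)
  obtain ⟨a, ha⟩ := Module.Dual.exists_forall_apply_ne_zero hφ <| by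
    rw [offDiag_card]
    exact lt_of_le_of_lt (Nat.sub_le _ _) (by rwa [← sq])
  refine ⟨a, fun u hu v hv huv => ?_⟩
  by_contra hne
  exact ha (u, v) (mem_offDiag.mpr ⟨hu, hv, hne⟩)
    (by simpa [sub_dotProduct, sub_eq_zero] using huv)

theorem Fintype.linearCombination_int_apply {R ι : Type*} [Ring R] [Fintype ι] (a : ι → R)
    (v : ι → ℤ) : Fintype.linearCombination ℤ a v = (fun i => (v i : R)) ⬝ᵥ a := by
  simp [Fintype.linearCombination_apply, dotProduct, zsmul_eq_mul]

theorem injOn_intCast_of_zero_or_one {R ι : Type*} [AddGroupWithOne R] [NeZero (1 : R)] :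
    Set.InjOn (fun (v : ι → ℤ) i => (v i : R)) {v | ∀ i, v i = 0 ∨ v i = 1} := by
  intro u hu v hv huv
  funext i
  have := congrFun huv i
  rcases hu i with h | h <;> rcases hv i with h' | h' <;> simp_all

theorem card_filter_card_le_le_pow {α : Type*} [Fintype α] (d : ℕ) :
    #{s : Finset α | #s ≤ d} ≤ (Fintype.card α + 1) ^ d := by
  classical
  calc #{s : Finset α | #s ≤ d}
      ≤ #((range (d + 1)).biUnion fun k => powersetCard k (univ : Finset α)) := by
        refine card_le_card fun s hs => ?_
        simp only [mem_filter, mem_univ, true_and] at hs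
        simp [mem_biUnion, hs]
    _ ≤ ∑ k ∈ range (d + 1), (Fintype.card α).choose k :=
        card_biUnion_le.trans_eq (by simp)
    _ ≤ ∑ k ∈ range (d + 1), Fintype.card α ^ k * 1 ^ (d - k) * d.choose k := by
        refine sum_le_sum fun k hk => ?_
        have : 1 ≤ d.choose k := Nat.choose_pos (Nat.lt_succ_iff.mp (mem_range.mp hk))
        calc (Fintype.card α).choose k ≤ Fintype.card α ^ k := Nat.choose_le_pow _ _
          _ ≤ _ := by simpa using Nat.le_mul_of_pos_right _ this
    _ = (Fintype.card α + 1) ^ d := (add_pow _ _ _).symm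

def sparseBoolFinset (n d : ℕ) : Finset (Fin n → ℤ) :=
  {v ∈ Fintype.piFinset fun _ => {0, 1} | #{i | v i ≠ 0} ≤ d}

theorem coe_sparseBoolFinset (n d : ℕ) :
    (sparseBoolFinset n d : Set (Fin n → ℤ)) = {v | SparseBool n d v} := by
  ext v
  simp [sparseBoolFinset, SparseBool]

theorem card_sparseBoolFinset_le (n d : ℕ) : #(sparseBoolFinset n d) ≤ (n + 1) ^ d := by
  calc #(sparseBoolFinset n d) ≤ #{s : Finset (Fin n) | #s ≤ d} := by
        refine card_le_card_of_injOn (fun v => ({i | v i ≠ 0} : Finset (Fin n)))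
          (fun v hv => ?_) ?_
        · simp_all [sparseBoolFinset]
        · intro u hu v hv huv
          rw [coe_sparseBoolFinset] at hu hv
          funext i
          have hi := Finset.ext_iff.mp huv i
          simp only [mem_filter, mem_univ, true_and] at hi
          rcases hu.1 i with h | h <;> rcases hv.1 i with h' | h' <;> simp [h, h'] at hi ⊢
    _ ≤ (n + 1) ^ d := by simpa using card_filter_card_le_le_pow (α := Fin n) d

theorem two_mul_succ_pow_le_two_pow_log {n d : ℕ} (hn : 2 ≤ n) (hd : 0 < d) :
    2 * (n + 1) ^ (2 * d) ≤ 2 ^ (5 * d * Nat.log 2 n) := by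
  have hL : 1 ≤ Nat.log 2 n := Nat.log_pos (by norm_num) hn
  have hn1 : n + 1 ≤ 2 ^ (2 * Nat.log 2 n) := (Nat.lt_pow_succ_log_self (by norm_num) n).trans_le
    (Nat.pow_le_pow_right (by norm_num) (by omega))
  calc 2 * (n + 1) ^ (2 * d) ≤ 2 * (2 ^ (2 * Nat.log 2 n)) ^ (2 * d) := by gcongr
    _ = 2 ^ (4 * d * Nat.log 2 n + 1) := by rw [← pow_mul, pow_succ]; ring_nf
    _ ≤ 2 ^ (5 * d * Nat.log 2 n) := Nat.pow_le_pow_right (by norm_num) (by nlinarith)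

theorem sparse_linear_sketch :
    ∃ c : ℕ, 0 < c ∧ ∀ n d : ℕ, 2 ≤ n → 0 < d →
      ∃ p : ℕ, p.Prime ∧ p ≤ 2 ^ (c * d * Nat.log 2 n) ∧
        ∃ f : (Fin n → ℤ) →ₗ[ℤ] ZMod p,
          Set.InjOn f {v | SparseBool n d v} := by
  refine ⟨5, by norm_num, fun n d hn hd => ?_⟩
  obtain ⟨p, hp, hlt, hle⟩ :=
    Nat.exists_prime_lt_and_le_two_mul ((n + 1) ^ (2 * d)) (by positivity)
  have : Fact p.Prime := ⟨hp⟩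
  refine ⟨p, hp, hle.trans (two_mul_succ_pow_le_two_pow_log hn hd), ?_⟩
  set reduce : (Fin n → ℤ) → Fin n → ZMod p := fun v i => (v i : ZMod p)
  set S := sparseBoolFinset n d
  obtain ⟨a, ha⟩ := exists_injOn_dotProduct (S.image reduce) <| by
    calc #(S.image reduce) ^ 2 ≤ ((n + 1) ^ d) ^ 2 :=
          Nat.pow_le_pow_left (card_image_le.trans (card_sparseBoolFinset_le n d)) 2
      _ < Nat.card (ZMod p) := by rwa [Nat.card_zmod, ← pow_mul, mul_comm]
  refine ⟨Fintype.linearCombination ℤ a, ?_⟩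
  have hreduce : Set.InjOn reduce S := by
    rw [coe_sparseBoolFinset]
    exact injOn_intCast_of_zero_or_one.mono fun v hv => hv.1
  have hf : ⇑(Fintype.linearCombination ℤ a) = (· ⬝ᵥ a) ∘ reduce :=
    funext (Fintype.linearCombination_int_apply a)
  rw [hf, ← coe_sparseBoolFinset]
  exact ha.comp hreduce fun v hv => by simpa using mem_image_of_mem reduce hv
end

section
/- Every finite simple graph on n vertices with girth at least 2r+1 (r ≥ 1) is ⌈n^{1/r}⌉-degenerate; that is, every subgraph of G contains a vertex of degree at most ⌈n^{1/r}⌉. -/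
open SimpleGraph

/-- A graph is `k`-degenerate if every nonempty (induced) subgraph has a vertex of
degree at most `k`, i.e. every nonempty finite set `s` of vertices contains a vertex
with at most `k` neighbors inside `s`. -/
def Degenerate {V : Type} [Fintype V] [DecidableEq V]
    (G : SimpleGraph V) [DecidableRel G.Adj] (k : ℕ) : Prop :=
  ∀ s : Finset V, s.Nonempty → ∃ v ∈ s, (s.filter fun u => G.Adj v u).card ≤ k

/-!
Suppose every vertex of a nonempty set `s` has more than `k` neighbours in `s`, so the induced
graph `H` on `s` has minimum degree at least `k + 1` and, like `G`, girth greater than `2r`.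
On a path of length `ℓ < r` the only neighbour of its first vertex is its second one (any other
would close a cycle of length at most `ℓ + 1`), so each path of length `ℓ` ending at a fixed
vertex `v` extends at its start in at least `k` ways: there are at least `k ^ r` paths of length
`r` ending at `v`. Two of them with the same start would close a cycle of length at most `2r`,
and none starts at `v`, so `k ^ r < |s| ≤ n ≤ ⌈n ^ (1 / r)⌉ ^ r`, a contradiction.
-/

open Finset

namespace SimpleGraph

variable {V : Type*} {G : SimpleGraph V} {u v w : V}

theorem Walk.IsPath.eq_of_length_add_length_lt_egirth {p q : G.Walk u v} (hp : p.IsPath)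
    (hq : q.IsPath) (h : ((p.length + q.length : ℕ) : ℕ∞) < G.egirth) : p = q := by
  by_contra hne
  obtain ⟨w, -, -, c, hc, hlen⟩ := hp.exists_isCycle_length_le_add_of_ne hq hne
  exact h.not_ge ((egirth_le_length hc).trans (by exact_mod_cast hlen))

theorem Walk.IsPath.eq_snd_of_adj_of_mem_support {p : G.Walk u v} (hp : p.IsPath)
    (h : ((p.length + 1 : ℕ) : ℕ∞) < G.egirth) (hadj : G.Adj u w) (hw : w ∈ p.support) :
    w = p.snd := by
  classical
  have hlen : (p.takeUntil w hw).length + (Walk.cons hadj Walk.nil).length ≤ p.length + 1 := by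
    simpa using p.length_takeUntil_le_length hw
  have := (hp.takeUntil hw).eq_of_length_add_length_lt_egirth
    (Walk.IsPath.nil.cons (by simpa using hadj.ne)) (lt_of_le_of_lt (by exact_mod_cast hlen) h)
  grind [p.getVert_length_takeUntil hw, Walk.length]

section Counting

variable [Fintype V] [DecidableEq V] [DecidableRel G.Adj] {d ℓ : ℕ}

variable (G) in
/-- Paths of length `ℓ` ending at `v`, bundled with their starting vertex, so that they can be
extended at the start by `Walk.cons`. -/
def finsetPathLengthTo (ℓ : ℕ) (v : V) : Finset (Σ u, G.Walk u v) :=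
  univ.sigma fun u => {p ∈ G.finsetWalkLength ℓ u v | p.IsPath}

@[simp]
theorem mem_finsetPathLengthTo {σ : Σ u, G.Walk u v} :
    σ ∈ G.finsetPathLengthTo ℓ v ↔ σ.2.length = ℓ ∧ σ.2.IsPath := by
  simp [finsetPathLengthTo, mem_finsetWalkLength_iff]

theorem card_finsetPathLengthTo_lt_card (hℓ : 0 < ℓ)
    (hg : ((2 * ℓ : ℕ) : ℕ∞) < G.egirth) :
    #(G.finsetPathLengthTo ℓ v) < Fintype.card V := by
  calc #(G.finsetPathLengthTo ℓ v) ≤ #(univ.erase v) := by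
        refine card_le_card_of_injOn Sigma.fst ?_ ?_
        · rintro ⟨u, p⟩ hp
          simp only [mem_coe, mem_finsetPathLengthTo, mem_erase, mem_univ, and_true] at hp ⊢
          rintro rfl
          exact hℓ.ne' (hp.1 ▸ Walk.length_eq_zero_iff.2 (Walk.isPath_iff_nil.1 hp.2))
        · rintro ⟨u, p⟩ hp ⟨u', q⟩ hq (rfl : u = u')
          simp only [mem_coe, mem_finsetPathLengthTo] at hp hq
          rw [hp.2.eq_of_length_add_length_lt_egirth hq.2 (by rwa [hp.1, hq.1, ← two_mul])]
    _ < Fintype.card V := card_erase_lt_of_mem (mem_univ v)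

theorem mul_card_finsetPathLengthTo_le (hdeg : ∀ u, d + 1 ≤ G.degree u)
    (hg : ((ℓ + 1 : ℕ) : ℕ∞) < G.egirth) :
    d * #(G.finsetPathLengthTo ℓ v) ≤ #(G.finsetPathLengthTo (ℓ + 1) v) := by
  set P := G.finsetPathLengthTo ℓ v
  let extensions (σ : Σ u, G.Walk u v) : Finset V :=
    {w ∈ G.neighborFinset σ.1 | w ∉ σ.2.support}
  have card_extensions : ∀ σ ∈ P, d ≤ #(extensions σ) := by
    rintro ⟨u, p⟩ hp
    rw [mem_finsetPathLengthTo] at hp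
    have hback : #{w ∈ G.neighborFinset u | w ∈ p.support} ≤ 1 := by
      refine card_le_one.2 fun a ha b hb => ?_
      simp only [mem_filter, mem_neighborFinset] at ha hb
      have hg' : ((p.length + 1 : ℕ) : ℕ∞) < G.egirth := hp.1 ▸ hg
      exact (hp.2.eq_snd_of_adj_of_mem_support hg' ha.1 ha.2).trans
        (hp.2.eq_snd_of_adj_of_mem_support hg' hb.1 hb.2).symm
    have hsplit := card_filter_add_card_filter_not (s := G.neighborFinset u) (· ∈ p.support)
    have := card_neighborFinset_eq_degree G u ▸ hdeg u
    change d ≤ #{w ∈ G.neighborFinset u | w ∉ p.support}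
    omega
  calc d * #P = ∑ _σ ∈ P, d := by rw [sum_const, smul_eq_mul, mul_comm]
    _ ≤ ∑ σ ∈ P, #(extensions σ) := sum_le_sum card_extensions
    _ = #(P.sigma extensions) := (card_sigma _ _).symm
    _ ≤ #(G.finsetPathLengthTo (ℓ + 1) v) := by
      refine card_le_card_of_injOn
        (fun x => if h : G.Adj x.2 x.1.1 then ⟨x.2, Walk.cons h x.1.2⟩ else x.1) ?_ ?_
      · rintro ⟨⟨u, p⟩, w⟩ hx
        simp only [coe_sigma, Set.mem_sigma_iff, mem_coe, mem_finsetPathLengthTo, mem_filter,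
          mem_neighborFinset, extensions, P] at hx
        simp [hx.2.1.symm, hx.1.1, hx.1.2.cons hx.2.2]
      · rintro ⟨⟨u, p⟩, w⟩ hx ⟨⟨u', p'⟩, w'⟩ hx' h
        simp only [coe_sigma, Set.mem_sigma_iff, mem_coe, mem_finsetPathLengthTo, mem_filter,
          mem_neighborFinset, extensions, P] at hx hx'
        simp only [hx.2.1.symm, hx'.2.1.symm, dif_pos] at h
        grind

theorem pow_le_card_finsetPathLengthTo (hdeg : ∀ u, d + 1 ≤ G.degree u)
    (hg : (ℓ : ℕ∞) < G.egirth) : d ^ ℓ ≤ #(G.finsetPathLengthTo ℓ v) := by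
  induction ℓ with
  | zero => simpa using ⟨⟨v, Walk.nil⟩, by simp⟩
  | succ ℓ ih =>
    calc d ^ (ℓ + 1) = d * d ^ ℓ := pow_succ' d ℓ
      _ ≤ d * #(G.finsetPathLengthTo ℓ v) :=
        Nat.mul_le_mul_left d (ih (lt_of_le_of_lt (by simp) hg))
      _ ≤ #(G.finsetPathLengthTo (ℓ + 1) v) := mul_card_finsetPathLengthTo_le hdeg hg

theorem pow_lt_card_of_lt_egirth [Nonempty V] {r : ℕ} (hdeg : ∀ u, d + 1 ≤ G.degree u)
    (hr : 0 < r) (hg : ((2 * r : ℕ) : ℕ∞) < G.egirth) : d ^ r < Fintype.card V := by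
  obtain ⟨v⟩ := ‹Nonempty V›
  calc d ^ r ≤ #(G.finsetPathLengthTo r v) :=
        pow_le_card_finsetPathLengthTo hdeg (lt_of_le_of_lt (by norm_cast; omega) hg)
    _ < Fintype.card V := card_finsetPathLengthTo_lt_card hr hg

end Counting

theorem degree_induce_coe_finset [DecidableRel G.Adj]
    {s : Finset V} (hv : v ∈ s) :
    (G.induce (s : Set V)).degree ⟨v, hv⟩ = #{u ∈ s | G.Adj v u} := by
  rw [← card_neighborFinset_eq_degree]
  exact card_bij (fun w _ => w.1) (by simp) (by simp) (by simp +contextual)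

theorem egirth_le_egirth_induce (s : Set V) : G.egirth ≤ (G.induce s).egirth :=
  (Copy.induce G s).isContained.egirth_le

end SimpleGraph

theorem le_natCeil_rpow_one_div_pow {x : ℝ} (hx : 0 ≤ x) {r : ℕ} (hr : r ≠ 0) :
    x ≤ (⌈x ^ ((1 : ℝ) / r)⌉₊ : ℝ) ^ r := by
  calc x = (x ^ ((1 : ℝ) / r)) ^ r := by rw [one_div, Real.rpow_inv_natCast_pow hx hr]
    _ ≤ (⌈x ^ ((1 : ℝ) / r)⌉₊ : ℝ) ^ r := by gcongr; exact Nat.le_ceil _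

theorem high_girth_degenerate {V : Type} [Fintype V] [DecidableEq V]
    (G : SimpleGraph V) [DecidableRel G.Adj] (r : ℕ) (hr : 1 ≤ r)
    (hgirth : ((2 * r : ℕ) : ℕ∞) < G.girth) :
    Degenerate G ⌈(Fintype.card V : ℝ) ^ ((1 : ℝ) / r)⌉₊ := by
  set k := ⌈(Fintype.card V : ℝ) ^ ((1 : ℝ) / r)⌉₊
  intro s hs
  by_contra! hdense
  have : Nonempty (s : Set V) := hs.coe_sort
  have hdeg : ∀ v, k + 1 ≤ (G.induce (s : Set V)).degree v := fun ⟨v, hv⟩ => by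
    rw [degree_induce_coe_finset hv]
    exact hdense v hv
  have hg : ((2 * r : ℕ) : ℕ∞) < (G.induce (s : Set V)).egirth :=
    (hgirth.trans_le (ENat.natCast_toNat_le_self G.egirth)).trans_le (egirth_le_egirth_induce _)
  have hsmall : k ^ r < #s := by
    simpa using pow_lt_card_of_lt_egirth hdeg hr hg
  have hlarge : Fintype.card V ≤ k ^ r := by
    exact_mod_cast le_natCeil_rpow_one_div_pow (Nat.cast_nonneg (Fintype.card V)) (by omega)
  exact (hsmall.trans_le (card_le_univ s)).not_ge hlarge
end

section
/- Let G be a finite graph, fix a linear order σ on its edge set, and let Ẽ be the set of edges e such that e is the σ-maximum edge of some cycle in G of length at most 2r. Then the graph G̃ = (V, E \ Ẽ) has the same connected components as G: two vertices are connected in G̃ if and only if they are connected in G. -/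
/-!
Induction on the weight of an edge `s(a, b)` of `G`: if it is not deleted it is an edge of the
smaller graph; if it is deleted, it is the heaviest edge of a cycle, and the rest of that cycle joins
`a` to `b` through strictly lighter edges, each of which joins its endpoints in the smaller graph by
the induction hypothesis.
-/

open SimpleGraph

/-- The set of edges of `G` that are the `w`-maximum edge of some cycle of `G` of
length at most `2r` (the edge order is given by an injective weight `w`). -/
def MaxShortCycleEdges {V : Type} (G : SimpleGraph V) (w : Sym2 V → ℕ) (r : ℕ) :
    Set (Sym2 V) :=
  {e | ∃ (x : V) (c : G.Walk x x), c.IsCycle ∧ c.length ≤ 2 * r ∧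
    e ∈ c.edges ∧ ∀ e' ∈ c.edges, e' ≠ e → w e' < w e}

namespace SimpleGraph

variable {V : Type*} {G H : SimpleGraph V}

lemma Walk.reachable_of_forall_mem_edges {u v : V} (p : G.Walk u v)
    (h : ∀ a b, s(a, b) ∈ p.edges → H.Reachable a b) : H.Reachable u v := by
  induction p with
  | nil => rfl
  | cons _ p ih => exact (h _ _ (by simp)).trans (ih fun a b hab => h a b (by simp [hab]))

/-- In the subgraph formed by the edges of `c`, the edge `s(a, b)` lies on a cycle, so it is not
a bridge there. -/
lemma Walk.IsCycle.exists_walk_of_mem_edges {u a b : V} {c : G.Walk u u} (hc : c.IsCycle)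
    (he : s(a, b) ∈ c.edges) : ∃ p : G.Walk a b, ∀ e ∈ p.edges, e ∈ c.edges ∧ e ≠ s(a, b) := by
  set K := G.deleteEdges {e | e ∉ c.edges}
  have hcK : ∀ e ∈ c.edges, e ∈ K.edgeSet := fun e he' =>
    (edgeSet_deleteEdges _ ▸ ⟨c.edges_subset_edgeSet he', not_not.mpr he'⟩)
  obtain ⟨-, hab⟩ := adj_and_reachable_delete_edges_iff_exists_cycle.mpr
    ⟨u, c.transfer K hcK, hc.transfer hcK, by rwa [Walk.edges_transfer]⟩
  obtain ⟨p, hp⟩ := reachable_deleteEdges_iff_exists_walk.mp hab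
  refine ⟨p.mapLe (deleteEdges_le _), fun e he' => ?_⟩
  rw [Walk.edges_mapLe_eq_edges] at he'
  have := p.edges_subset_edgeSet he'
  rw [edgeSet_deleteEdges] at this
  exact ⟨not_not.mp this.2, fun h => hp (h ▸ he')⟩

def IsCycleMaxEdge {α : Type*} [LT α] (G : SimpleGraph V) (w : Sym2 V → α) (e : Sym2 V) : Prop :=
  ∃ (x : V) (c : G.Walk x x), c.IsCycle ∧ e ∈ c.edges ∧ ∀ e' ∈ c.edges, e' ≠ e → w e' < w e

section IsCycleMaxEdge

variable {α : Type*} [LT α] [WellFoundedLT α] {w : Sym2 V → α} {S : Set (Sym2 V)}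

theorem reachable_deleteEdges_of_adj_of_forall_isCycleMaxEdge
    (hS : ∀ e ∈ S, G.IsCycleMaxEdge w e) {a b : V} (hadj : G.Adj a b) :
    (G.deleteEdges S).Reachable a b := by
  induction hwt : w s(a, b) using WellFoundedLT.induction generalizing a b with
  | ind t ih =>
    by_cases heS : s(a, b) ∈ S
    · obtain ⟨x, c, hc, he, hmax⟩ := hS _ heS
      obtain ⟨q, hq⟩ := hc.exists_walk_of_mem_edges he
      refine q.reachable_of_forall_mem_edges fun a' b' he' => ?_
      obtain ⟨hec, hne⟩ := hq _ he'
      exact ih _ (hwt ▸ hmax _ hec hne) (c.adj_of_mem_edges hec) rfl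
    · exact (deleteEdges_adj.mpr ⟨hadj, heS⟩).reachable

theorem reachable_deleteEdges_iff_of_forall_isCycleMaxEdge
    (hS : ∀ e ∈ S, G.IsCycleMaxEdge w e) {u v : V} :
    (G.deleteEdges S).Reachable u v ↔ G.Reachable u v :=
  ⟨fun h => h.mono (deleteEdges_le _), fun ⟨p⟩ => p.reachable_of_forall_mem_edges fun _ _ he =>
    reachable_deleteEdges_of_adj_of_forall_isCycleMaxEdge hS (p.adj_of_mem_edges he)⟩

end IsCycleMaxEdge

end SimpleGraph

theorem delete_max_short_cycle_edges_preserves_components_general {V : Type}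
    (G : SimpleGraph V) (w : Sym2 V → ℕ) (r : ℕ) :
    ∀ u v : V, (G.deleteEdges (MaxShortCycleEdges G w r)).Reachable u v ↔
      G.Reachable u v := by
  intro u v
  refine reachable_deleteEdges_iff_of_forall_isCycleMaxEdge (w := w) ?_
  rintro _ ⟨x, c, hc, -, he, hmax⟩
  exact ⟨x, c, hc, he, hmax⟩

theorem delete_max_short_cycle_edges_preserves_components {V : Type} [Fintype V]
    (G : SimpleGraph V) (w : Sym2 V → ℕ) (hw : Function.Injective w) (r : ℕ)
    (hr : 1 ≤ r) :
    ∀ u v : V, (G.deleteEdges (MaxShortCycleEdges G w r)).Reachable u v ↔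
      G.Reachable u v :=
  delete_max_short_cycle_edges_preserves_components_general G w r
end

section
/- Let f : ℤ^n → 𝔽_p be a linear map injective on d-sparse Boolean vectors. Suppose G is a finite graph on vertex set {1,…,n} and for each vertex i we know the pair (deg(i), f(a_i)) where a_i ∈ {0,1}^n is row i of the adjacency matrix. If vertex k has deg(k) ≤ d, then a_k is uniquely determined, and the message pairs for the graph G − {k} can be computed without further knowledge of G: for each neighbor j of k, the new pair is (deg(j) − 1, f(a_j) − f(e_k)), where e_k is the k-th standard basis vector. -/
open SimpleGraph

/-- Row `i` of the adjacency matrix of `G`. -/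
def adjRow {n : ℕ} (G : SimpleGraph (Fin n)) [DecidableRel G.Adj] (i : Fin n) :
    Fin n → ℤ :=
  fun j => if G.Adj i j then 1 else 0

namespace SimpleGraph

variable {V : Type*} (G : SimpleGraph V)

theorem deleteEdges_setOf_mem_eq_deleteIncidenceSet (k : V) :
    G.deleteEdges {e | k ∈ e} = G.deleteIncidenceSet k := by
  ext a b
  simp only [deleteEdges_adj, Set.mem_ofPred_eq, Sym2.mem_iff, deleteIncidenceSet_adj]
  grind

theorem neighborSet_deleteIncidenceSet {j k : V} (hjk : j ≠ k) :
    (G.deleteIncidenceSet k).neighborSet j = G.neighborSet j \ {k} := by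
  ext i
  simp [deleteIncidenceSet_adj, hjk]

theorem ncard_neighborSet_eq_degree (v : V) [Fintype (G.neighborSet v)] :
    (G.neighborSet v).ncard = G.degree v := by
  rw [Set.ncard_eq_toFinset_card', ← neighborFinset_def, card_neighborFinset_eq_degree]

end SimpleGraph

section AdjRow

variable {n : ℕ} (G : SimpleGraph (Fin n)) [DecidableRel G.Adj]

theorem sparseBool_adjRow {d : ℕ} {k : Fin n} (hk : G.degree k ≤ d) :
    SparseBool n d (adjRow G k) := by
  have hsupp : (Finset.univ.filter fun i => adjRow G k i ≠ 0) = G.neighborFinset k := by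
    ext i
    by_cases h : G.Adj k i <;> simp [adjRow, h]
  refine ⟨fun i => ?_, ?_⟩
  · by_cases h : G.Adj k i <;> simp [adjRow, h]
  · rwa [hsupp, card_neighborFinset_eq_degree]

variable {j k : Fin n} [DecidableRel (G.deleteIncidenceSet k).Adj]

theorem adjRow_deleteIncidenceSet_of_adj (hjk : G.Adj j k) :
    adjRow (G.deleteIncidenceSet k) j = adjRow G j - Pi.single k 1 := by
  funext i
  by_cases hik : i = k
  · subst hik
    simp [adjRow, deleteIncidenceSet_adj, hjk]
  · simp [adjRow, deleteIncidenceSet_adj, hik, hjk.ne]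

theorem adjRow_deleteIncidenceSet_of_not_adj (hjk : j ≠ k) (hadj : ¬G.Adj j k) :
    adjRow (G.deleteIncidenceSet k) j = adjRow G j := by
  funext i
  by_cases hik : i = k
  · subst hik
    simp [adjRow, deleteIncidenceSet_adj, hadj]
  · simp [adjRow, deleteIncidenceSet_adj, hik, hjk]

end AdjRow

theorem pruning_step_correct {n d p : ℕ} (f : (Fin n → ℤ) →ₗ[ℤ] ZMod p)
    (hf : Set.InjOn f {v | SparseBool n d v})
    (G : SimpleGraph (Fin n)) [DecidableRel G.Adj] (k : Fin n)
    (hk : G.degree k ≤ d) :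
    (∀ b : Fin n → ℤ, SparseBool n d b → f b = f (adjRow G k) → b = adjRow G k) ∧
    (∀ j : Fin n, G.Adj k j →
      ((G.deleteEdges {e | k ∈ e}).neighborSet j).ncard = G.degree j - 1 ∧
      ∀ [DecidableRel (G.deleteEdges {e | k ∈ e}).Adj],
        f (adjRow (G.deleteEdges {e | k ∈ e}) j) =
          f (adjRow G j) - f (Pi.single k 1)) ∧
    (∀ j : Fin n, j ≠ k → ¬ G.Adj k j →
      ((G.deleteEdges {e | k ∈ e}).neighborSet j).ncard = G.degree j ∧
      ∀ [DecidableRel (G.deleteEdges {e | k ∈ e}).Adj],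
        f (adjRow (G.deleteEdges {e | k ∈ e}) j) = f (adjRow G j)) := by
  rw [deleteEdges_setOf_mem_eq_deleteIncidenceSet]
  refine ⟨fun b hb hfb => hf hb (sparseBool_adjRow G hk) hfb, ?_, ?_⟩
  · intro j hkj
    have hkj' : k ∈ G.neighborSet j := hkj.symm
    refine ⟨?_, fun {_} => ?_⟩
    · rw [neighborSet_deleteIncidenceSet G hkj.ne', Set.ncard_sdiff_singleton_of_mem hkj',
        ncard_neighborSet_eq_degree]
    · rw [adjRow_deleteIncidenceSet_of_adj G hkj.symm, map_sub]
  · intro j hjk hkj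
    have hkj' : k ∉ G.neighborSet j := fun h => hkj h.symm
    refine ⟨?_, fun {_} => ?_⟩
    · rw [neighborSet_deleteIncidenceSet G hjk, Set.sdiff_singleton_eq_self hkj',
        ncard_neighborSet_eq_degree]
    · rw [adjRow_deleteIncidenceSet_of_not_adj G hjk hkj']
end
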